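/- arXiv:1706.07775 — 2 statements merged into one kernel-verified Lean document; each statement's English description precedes it below -/
import Mathlib

section
/- Let R be a unital ring and a, b, c ∈ R such that cab is regular with inner inverse t (i.e., cab·t·cab = cab). Let x = b t c. Then the following are equivalent: (1) xax = x and bR = xR; (2) xax = x and bR ⊆ xR; (3) Rb = Rcab. -/
/-! Everything hinges on the identity `b t (cab) = b`. It says `b ∈ R·cab`, which is the same
as `Rb = R·cab` because `R·cab ⊆ Rb` always; conversely `b = s·cab` gives
`b t cab = s·cab·t·cab = s·cab = b`. Since `x a = b t c a`, the identity reads `x a b = b`,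
which follows from `x a x = x` once `b ∈ xR`, and in turn yields `x a x = (b t cab) t c = x`
and `b = x (ab) ∈ xR`, while `x = b (tc) ∈ bR` always. -/

section Monoid

variable {M : Type*} [Monoid M]

theorem setOf_exists_eq_mul_subset_iff {b x : M} :
    {z : M | ∃ r, z = b * r} ⊆ {z | ∃ r, z = x * r} ↔ x ∣ b :=
  ⟨fun h => h ⟨1, (mul_one b).symm⟩, fun h _ hz => h.trans hz⟩

theorem setOf_exists_eq_mul_left_eq_iff {b q : M} :
    {z : M | ∃ r, z = r * b} = {z | ∃ r, z = r * (q * b)} ↔ ∃ s, b = s * (q * b) := by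
  constructor
  · intro h
    have hb : b ∈ {z : M | ∃ r, z = r * (q * b)} := h ▸ ⟨1, (one_mul b).symm⟩
    exact hb
  · rintro ⟨s, hs⟩
    ext z
    constructor
    · rintro ⟨r, rfl⟩
      exact ⟨r * s, by rw [mul_assoc, ← hs]⟩
    · rintro ⟨r, rfl⟩
      exact ⟨r * q, (mul_assoc r q b).symm⟩

theorem mul_mul_eq_of_mul_mul_self_eq {x a b : M} (hx : x * a * x = x) (hb : x ∣ b) :
    x * a * b = b := by
  obtain ⟨r, rfl⟩ := hb
  rw [← mul_assoc, hx]

theorem mul_mul_eq_self_of_eq_mul {p t b s : M} (ht : p * t * p = p) (hb : b = s * p) :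
    b * t * p = b := by
  rw [hb, mul_assoc s, mul_assoc s, ht]

end Monoid

theorem inner_inverse_tfae_b {R : Type*} [Ring R] (a b c t : R)
    (ht : c * a * b * t * (c * a * b) = c * a * b) (x : R) (hx : x = b * t * c) :
    List.TFAE
      [x * a * x = x ∧ {z : R | ∃ r : R, z = b * r} = {z : R | ∃ r : R, z = x * r},
       x * a * x = x ∧ {z : R | ∃ r : R, z = b * r} ⊆ {z : R | ∃ r : R, z = x * r},
       {z : R | ∃ r : R, z = r * b} = {z : R | ∃ r : R, z = r * (c * a * b)}] := by
  subst hx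
  have hpivot : b * t * (c * a * b) = b ↔ ∃ s, b = s * (c * a * b) :=
    ⟨fun h => ⟨b * t, h.symm⟩, fun ⟨_, hs⟩ => mul_mul_eq_self_of_eq_mul ht hs⟩
  have hxab : b * t * c * (a * b) = b * t * (c * a * b) := by simp only [mul_assoc]
  tfae_have 1 → 2 := fun ⟨hxax, hEq⟩ => ⟨hxax, hEq.subset⟩
  tfae_have 2 → 3 := fun ⟨hxax, hsub⟩ => by
    rw [setOf_exists_eq_mul_left_eq_iff, ← hpivot, ← hxab, ← mul_assoc]
    exact mul_mul_eq_of_mul_mul_self_eq hxax (setOf_exists_eq_mul_subset_iff.1 hsub)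
  tfae_have 3 → 1 := fun hRb => by
    have hb := hpivot.2 (setOf_exists_eq_mul_left_eq_iff.1 hRb)
    refine ⟨?_, (setOf_exists_eq_mul_subset_iff.2 ⟨a * b, (hxab.trans hb).symm⟩).antisymm
      (setOf_exists_eq_mul_subset_iff.2 ⟨t * c, mul_assoc b t c⟩)⟩
    calc b * t * c * a * (b * t * c) = b * t * (c * a * b) * t * c := by simp only [mul_assoc]
      _ = b * t * c := by rw [hb]
  tfae_finish
end

section
/- Let R be a unital ring and a, b, c ∈ R. Then the following are equivalent: (1) there exists y ∈ R such that aya = a and y is the (b,c)-inverse of a; (2) a is regular, aR = abR, Rca = Ra, (ab)° = b°, and °(ca) = °c; (3) a is regular, R = a° ⊕ bR, and R = °a ⊕ Rc. -/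
def IsBCInverse {R : Type*} [Ring R] (a b c y : R) : Prop :=
  (∃ r : R, y = b * r * y) ∧ (∃ s : R, y = y * s * c) ∧ y * a * b = b ∧ c * a * y = c

def RingRegular {R : Type*} [Ring R] (x : R) : Prop := ∃ z : R, x * z * x = x

/-!
Conditions (2) and (3) both say that `a` is regular, that `a ∈ abR` and `a ∈ Rca`, and that
`a° ∩ bR = 0` and `°a ∩ Rc = 0`. If `aza = a`, `abr = a` and `sca = a`, then `y = brzsc` is an
inner (b,c)-inverse of `a`: the identities `yab = b` and `cay = c` hold because `b - brzab` lies
in `a° ∩ bR` and `c - cazsc` in `°a ∩ Rc`.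
-/

section

variable {R : Type*} [Ring R] {a b c : R}

theorem setOf_eq_mul_eq_setOf_eq_mul_mul_iff :
    {z : R | ∃ r, z = a * r} = {z : R | ∃ r, z = a * b * r} ↔ ∃ t, a = a * b * t := by
  constructor
  · intro h
    have ha : a ∈ {z : R | ∃ r, z = a * r} := ⟨1, (mul_one a).symm⟩
    rwa [h] at ha
  · rintro ⟨t, ht⟩
    ext z
    constructor
    · rintro ⟨r, rfl⟩
      exact ⟨t * r, by rw [← mul_assoc, ← ht]⟩
    · rintro ⟨r, rfl⟩
      exact ⟨b * r, mul_assoc a b r⟩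

theorem setOf_eq_mul_eq_setOf_eq_mul_mul_left_iff :
    {z : R | ∃ r, z = r * a} = {z : R | ∃ r, z = r * (c * a)} ↔ ∃ u, a = u * (c * a) := by
  constructor
  · intro h
    have ha : a ∈ {z : R | ∃ r, z = r * a} := ⟨1, (one_mul a).symm⟩
    rwa [h] at ha
  · rintro ⟨u, hu⟩
    ext z
    constructor
    · rintro ⟨r, rfl⟩
      exact ⟨r * u, by rw [mul_assoc r u, ← hu]⟩
    · rintro ⟨r, rfl⟩
      exact ⟨r * c, (mul_assoc r c a).symm⟩

theorem setOf_mul_mul_eq_zero_eq_iff :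
    {r : R | a * b * r = 0} = {r : R | b * r = 0} ↔
      ∀ x, a * x = 0 → (∃ r, x = b * r) → x = 0 := by
  constructor
  · rintro h x hx ⟨r, rfl⟩
    have hr : r ∈ {r : R | a * b * r = 0} := by rwa [Set.mem_ofPred_eq, mul_assoc]
    rwa [h] at hr
  · intro h
    ext r
    simp only [Set.mem_ofPred_eq]
    refine ⟨fun hr => h (b * r) (by rwa [← mul_assoc]) ⟨r, rfl⟩, fun hr => ?_⟩
    rw [mul_assoc, hr, mul_zero]

theorem setOf_mul_mul_eq_zero_eq_left_iff :
    {r : R | r * (c * a) = 0} = {r : R | r * c = 0} ↔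
      ∀ x, x * a = 0 → (∃ r, x = r * c) → x = 0 := by
  constructor
  · rintro h x hx ⟨r, rfl⟩
    have hr : r ∈ {r : R | r * (c * a) = 0} := by rwa [Set.mem_ofPred_eq, ← mul_assoc]
    rwa [h] at hr
  · intro h
    ext r
    simp only [Set.mem_ofPred_eq]
    refine ⟨fun hr => h (r * c) (by rwa [mul_assoc]) ⟨r, rfl⟩, fun hr => ?_⟩
    rw [← mul_assoc, hr, zero_mul]

theorem forall_exists_mul_eq_zero_eq_add_iff :
    (∀ x : R, ∃ w r, a * w = 0 ∧ x = w + b * r) ↔ ∃ t, a = a * b * t := by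
  constructor
  · intro h
    obtain ⟨w, r, hw, h1⟩ := h 1
    refine ⟨r, ?_⟩
    calc a = a * (w + b * r) := by rw [← h1, mul_one]
      _ = a * b * r := by rw [mul_add, hw, zero_add, mul_assoc]
  · rintro ⟨t, ht⟩ x
    refine ⟨x - b * (t * x), t * x, ?_, (sub_add_cancel x _).symm⟩
    rw [mul_sub, ← mul_assoc, ← mul_assoc, ← ht, sub_self]

theorem forall_exists_mul_eq_zero_eq_add_left_iff :
    (∀ x : R, ∃ w r, w * a = 0 ∧ x = w + r * c) ↔ ∃ u, a = u * (c * a) := by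
  constructor
  · intro h
    obtain ⟨w, r, hw, h1⟩ := h 1
    refine ⟨r, ?_⟩
    calc a = (w + r * c) * a := by rw [← h1, one_mul]
      _ = r * (c * a) := by rw [add_mul, hw, zero_add, mul_assoc]
  · rintro ⟨u, hu⟩ x
    refine ⟨x - x * u * c, x * u, ?_, (sub_add_cancel x _).symm⟩
    rw [sub_mul, mul_assoc (x * u), mul_assoc x, ← hu, sub_self]

end

namespace IsBCInverse

variable {R : Type*} [Ring R] {a b c y : R}

theorem exists_eq_mul_mul (h : IsBCInverse a b c y) (hy : a * y * a = a) :
    ∃ t, a = a * b * t := by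
  obtain ⟨⟨r, hr⟩, -, -, -⟩ := h
  refine ⟨r * y * a, ?_⟩
  calc a = a * (b * r * y) * a := by rw [← hr, hy]
    _ = a * b * (r * y * a) := by noncomm_ring

theorem exists_eq_mul_mul_left (h : IsBCInverse a b c y) (hy : a * y * a = a) :
    ∃ u, a = u * (c * a) := by
  obtain ⟨-, ⟨s, hs⟩, -, -⟩ := h
  refine ⟨a * y * s, ?_⟩
  calc a = a * (y * s * c) * a := by rw [← hs, hy]
    _ = a * y * s * (c * a) := by noncomm_ring

theorem eq_zero_of_mul_eq_zero (h : IsBCInverse a b c y) {x : R} (hx : a * x = 0)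
    (hxb : ∃ r, x = b * r) : x = 0 := by
  obtain ⟨r, rfl⟩ := hxb
  rw [← h.2.2.1, mul_assoc, mul_assoc y, hx, mul_zero]

theorem eq_zero_of_mul_eq_zero_left (h : IsBCInverse a b c y) {x : R} (hx : x * a = 0)
    (hxc : ∃ r, x = r * c) : x = 0 := by
  obtain ⟨r, rfl⟩ := hxc
  rw [← h.2.2.2, ← mul_assoc, ← mul_assoc, hx, zero_mul]

end IsBCInverse

section

variable {R : Type*} [Ring R] {a b c z r s : R}

theorem isBCInverse_of_mul_mul_eq (hz : a * z * a = a) (hr : a * b * r = a)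
    (hs : s * (c * a) = a) (hb : ∀ x, a * x = 0 → (∃ t, x = b * t) → x = 0)
    (hc : ∀ x, x * a = 0 → (∃ t, x = t * c) → x = 0) :
    a * (b * r * z * s * c) * a = a ∧ IsBCInverse a b c (b * r * z * s * c) := by
  have hbrzab : b * r * z * a * b = b := by
    refine (sub_eq_zero.mp (hb _ ?_ ⟨1 - r * z * a * b, by noncomm_ring⟩)).symm
    calc a * (b - b * r * z * a * b) = a * b - a * b * r * z * a * b := by noncomm_ring
      _ = 0 := by rw [hr, hz, sub_self]
  have hcazsc : c * a * z * s * c = c := by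
    refine (sub_eq_zero.mp (hc _ ?_ ⟨1 - c * a * z * s, by noncomm_ring⟩)).symm
    calc (c - c * a * z * s * c) * a = c * a - c * (a * z * (s * (c * a))) := by noncomm_ring
      _ = 0 := by rw [hs, hz, sub_self]
  have hyab : b * r * z * s * c * a * b = b := by
    calc b * r * z * s * c * a * b = b * r * z * (s * (c * a)) * b := by noncomm_ring
      _ = b := by rw [hs, hbrzab]
  have hcay : c * a * (b * r * z * s * c) = c := by
    calc c * a * (b * r * z * s * c) = c * (a * b * r) * z * s * c := by noncomm_ring
      _ = c := by rw [hr, hcazsc]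
  refine ⟨?_, ⟨r * z * s * (c * a), ?_⟩, ⟨a * b * r * z * s, ?_⟩, hyab, hcay⟩
  · calc a * (b * r * z * s * c) * a = a * b * r * z * (s * (c * a)) := by noncomm_ring
      _ = a := by rw [hs, hr, hz]
  · conv_lhs => rw [← hcay]
    noncomm_ring
  · conv_lhs => rw [← hyab]
    noncomm_ring

end

theorem bc_inverse_inner_tfae {R : Type*} [Ring R] (a b c : R) :
    List.TFAE
      [∃ y : R, a * y * a = a ∧ IsBCInverse a b c y,
       RingRegular a ∧
         {z : R | ∃ r : R, z = a * r} = {z : R | ∃ r : R, z = a * b * r} ∧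
         {z : R | ∃ r : R, z = r * a} = {z : R | ∃ r : R, z = r * (c * a)} ∧
         {r : R | a * b * r = 0} = {r : R | b * r = 0} ∧
         {r : R | r * (c * a) = 0} = {r : R | r * c = 0},
       RingRegular a ∧
         ((∀ x : R, ∃ w r : R, a * w = 0 ∧ x = w + b * r) ∧
          (∀ x : R, a * x = 0 → (∃ r : R, x = b * r) → x = 0)) ∧
         ((∀ x : R, ∃ w r : R, w * a = 0 ∧ x = w + r * c) ∧
          (∀ x : R, x * a = 0 → (∃ r : R, x = r * c) → x = 0))] := by
  simp only [setOf_eq_mul_eq_setOf_eq_mul_mul_iff, setOf_eq_mul_eq_setOf_eq_mul_mul_left_iff,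
    setOf_mul_mul_eq_zero_eq_iff, setOf_mul_mul_eq_zero_eq_left_iff,
    forall_exists_mul_eq_zero_eq_add_iff, forall_exists_mul_eq_zero_eq_add_left_iff]
  tfae_have 1 → 2 := fun ⟨y, hy, h⟩ =>
    ⟨⟨y, hy⟩, h.exists_eq_mul_mul hy, h.exists_eq_mul_mul_left hy,
      fun _ => h.eq_zero_of_mul_eq_zero, fun _ => h.eq_zero_of_mul_eq_zero_left⟩
  tfae_have 2 → 3 := fun ⟨hreg, hr, hs, hb, hc⟩ => ⟨hreg, ⟨hr, hb⟩, hs, hc⟩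
  tfae_have 3 → 1 := fun ⟨⟨z, hz⟩, ⟨⟨r, hr⟩, hb⟩, ⟨s, hs⟩, hc⟩ =>
    ⟨_, isBCInverse_of_mul_mul_eq hz hr.symm hs.symm hb hc⟩
  tfae_finish
end
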